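/- For any tree T on d ≥ 4 nodes, the size of its equivalence class [T] equals the product over i of (1 + ℓ_i), where ℓ_1,...,ℓ_κ are the sizes of the groups of leaves sharing a common neighbor. -/

import Mathlib

/-- A leaf of a graph: a vertex with a unique neighbor. -/
def IsLeaf {d : ℕ} (G : SimpleGraph (Fin d)) (v : Fin d) : Prop :=
  ∃! w, G.Adj v w

/-- A permutation that swaps a set of leaves (no two of which can share a
common neighbor, since the swap is a function) with their unique neighbors,
fixing everything else. -/
def IsLeafSwapPerm {d : ℕ} (G : SimpleGraph (Fin d)) (e : Equiv.Perm (Fin d)) : Prop :=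
  (∀ v, e (e v) = v) ∧
  ∀ v, e v ≠ v → (IsLeaf G v ∧ G.Adj v (e v)) ∨ (IsLeaf G (e v) ∧ G.Adj v (e v))

/-- The graph obtained by relabeling `G` along a permutation. -/
def relabel {d : ℕ} (G : SimpleGraph (Fin d)) (e : Equiv.Perm (Fin d)) :
    SimpleGraph (Fin d) :=
  G.map e.toEmbedding

/-- The equivalence class `[T]`: all graphs obtained from `G` by swapping a set of
leaves (with pairwise distinct neighbors) with their neighbors. -/
def eqClass {d : ℕ} (G : SimpleGraph (Fin d)) : Set (SimpleGraph (Fin d)) :=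
  {H | ∃ e : Equiv.Perm (Fin d), IsLeafSwapPerm G e ∧ H = relabel G e}

/-- The number of leaf neighbors of a vertex `v`. -/
noncomputable def leafNbrCount {d : ℕ} (G : SimpleGraph (Fin d)) (v : Fin d) : ℕ :=
  {u | G.Adj v u ∧ IsLeaf G u}.ncard

/-!
In a connected graph on at least three vertices no edge joins two leaves. A leaf-swap
permutation is therefore the same thing as an independent choice, at every vertex, of at most
one of its leaf neighbours to swap with, so there are `∏ v, (1 + ℓ_v)` of them. Distinct
permutations give distinct relabelled trees: a leaf stays a leaf after relabelling exactly when
it is not moved, a moved leaf goes to its unique neighbour, and a leaf-swap permutation is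
determined by what it does to the leaves.
-/

def NoAdjacentLeaves {d : ℕ} (G : SimpleGraph (Fin d)) : Prop :=
  ∀ ⦃u v⦄, G.Adj u v → IsLeaf G u → ¬IsLeaf G v

section Leaves

variable {d : ℕ} {G : SimpleGraph (Fin d)}

lemma IsLeaf.of_iso {d' : ℕ} {G' : SimpleGraph (Fin d')} (f : G ≃g G') {v : Fin d}
    (hv : IsLeaf G v) : IsLeaf G' (f v) := by
  obtain ⟨w, hw, huniq⟩ := hv
  refine ⟨f w, f.map_adj_iff.2 hw, fun y hy => ?_⟩
  have : G.Adj v (f.symm y) := by simpa using f.symm.map_adj_iff.2 hy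
  rw [← f.apply_symm_apply y, huniq _ this]

lemma isLeaf_iso_iff {d' : ℕ} {G' : SimpleGraph (Fin d')} (f : G ≃g G') (v : Fin d) :
    IsLeaf G' (f v) ↔ IsLeaf G v :=
  ⟨fun h => by simpa using h.of_iso f.symm, fun h => h.of_iso f⟩

lemma SimpleGraph.Connected.noAdjacentLeaves (hG : G.Connected) (hd : 3 ≤ d) :
    NoAdjacentLeaves G := by
  intro u v huv hu hv
  obtain ⟨x, -, hx⟩ := Finset.exists_mem_notMem_of_card_lt_card (s := {u, v})
    (t := Finset.univ) (by grind [Finset.card_le_two, Finset.card_univ, Fintype.card_fin])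
  -- a walk from `u` to a third vertex must leave the edge `uv` through one of its leaves
  obtain ⟨⟨⟨a, b⟩, hab⟩, -, ha, hb⟩ :=
    (hG.preconnected u x).some.exists_boundary_dart {u, v} (by simp) (by simpa using hx)
  simp only [Set.mem_insert_iff, Set.mem_singleton_iff] at ha hb
  rcases ha with rfl | rfl
  · exact hb (Or.inr (hu.unique hab huv))
  · exact hb (Or.inl (hv.unique hab huv.symm))

lemma isLeaf_relabel_iff {e : Equiv.Perm (Fin d)} (he : ∀ v, e (e v) = v) (v : Fin d) :
    IsLeaf (relabel G e) v ↔ IsLeaf G (e v) := by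
  convert isLeaf_iso_iff (G' := relabel G e) (SimpleGraph.Iso.map e G) (e v) using 2
  exact (he v).symm

end Leaves

namespace IsLeafSwapPerm

variable {d : ℕ} {G : SimpleGraph (Fin d)} {e e' : Equiv.Perm (Fin d)} {v : Fin d}

lemma adj (he : IsLeafSwapPerm G e) (hv : e v ≠ v) : G.Adj v (e v) := by
  rcases he.2 v hv with ⟨-, h⟩ | ⟨-, h⟩ <;> exact h

lemma isLeaf_apply (he : IsLeafSwapPerm G e) (hv : ¬IsLeaf G v) (hmove : e v ≠ v) :
    IsLeaf G (e v) :=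
  ((he.2 v hmove).resolve_left fun h => hv h.1).1

lemma isLeaf_apply_iff (hG : NoAdjacentLeaves G) (he : IsLeafSwapPerm G e) (hv : IsLeaf G v) :
    IsLeaf G (e v) ↔ e v = v :=
  ⟨fun h => by_contra fun hmove => hG (he.adj hmove) hv h, fun h => h.symm ▸ hv⟩

lemma apply_eq_of_isLeaf_eq (he : IsLeafSwapPerm G e) (he' : ∀ v, e' (e' v) = v)
    (hleaf : ∀ u, IsLeaf G u → e u = e' u) (hv : ¬IsLeaf G v) (hmove : e v ≠ v) :
    e' v = e v := by
  have hback : e' (e v) = v := by rw [← hleaf _ (he.isLeaf_apply hv hmove), he.1]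
  calc e' v = e' (e' (e v)) := by rw [hback]
    _ = e v := he' _

lemma ext_of_isLeaf (he : IsLeafSwapPerm G e) (he' : IsLeafSwapPerm G e')
    (hleaf : ∀ u, IsLeaf G u → e u = e' u) : e = e' := by
  refine Equiv.ext fun v => ?_
  by_cases hv : IsLeaf G v
  · exact hleaf v hv
  by_cases hmove : e v = v
  · by_cases hmove' : e' v = v
    · rw [hmove, hmove']
    · exact apply_eq_of_isLeaf_eq he' he.1 (fun u hu => (hleaf u hu).symm) hv hmove'
  · exact (apply_eq_of_isLeaf_eq he he'.1 hleaf hv hmove).symm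

end IsLeafSwapPerm

lemma relabel_injOn {d : ℕ} {G : SimpleGraph (Fin d)} (hG : NoAdjacentLeaves G) :
    Set.InjOn (relabel G) {e | IsLeafSwapPerm G e} := by
  intro e he e' he' hrel
  refine IsLeafSwapPerm.ext_of_isLeaf he he' fun u hu => ?_
  -- `relabel G e` sees `u` as a leaf exactly when `e` fixes `u`
  have hfix : e u = u ↔ e' u = u := by
    rw [← he.isLeaf_apply_iff hG hu, ← he'.isLeaf_apply_iff hG hu, ← isLeaf_relabel_iff he.1,
      ← isLeaf_relabel_iff he'.1, hrel]
  by_cases h : e u = u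
  · rw [h, hfix.1 h]
  · exact hu.unique (he.adj h) (he'.adj (mt hfix.2 h))

abbrev LeafNbr {d : ℕ} (G : SimpleGraph (Fin d)) (v : Fin d) : Type :=
  {u : Fin d // G.Adj v u ∧ IsLeaf G u}

section LeafChoice

variable {d : ℕ} {G : SimpleGraph (Fin d)}

variable (G) in
noncomputable def leafChoice (e : Equiv.Perm (Fin d)) (v : Fin d) : Option (LeafNbr G v) :=
  open Classical in
  if h : G.Adj v (e v) ∧ IsLeaf G (e v) then some ⟨e v, h⟩ else none

def Picks (g : ∀ v, Option (LeafNbr G v)) (w v : Fin d) : Prop :=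
  ∃ h, g w = some ⟨v, h⟩

open Classical in
noncomputable def picker (g : ∀ v, Option (LeafNbr G v)) (v : Fin d) : Fin d :=
  if h : ∃ w, Picks g w v then h.choose else v

noncomputable def swapOfChoice (g : ∀ v, Option (LeafNbr G v)) (v : Fin d) : Fin d :=
  match g v with
  | some u => u
  | none => picker g v

variable {g : ∀ v, Option (LeafNbr G v)} {e : Equiv.Perm (Fin d)} {v w : Fin d}

lemma Picks.adj_isLeaf (h : Picks g w v) : G.Adj w v ∧ IsLeaf G v :=
  h.1

lemma picker_eq (h : Picks g w v) : picker g v = w := by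
  have hex : ∃ w, Picks g w v := ⟨w, h⟩
  rw [picker, dif_pos hex]
  exact h.adj_isLeaf.2.unique hex.choose_spec.adj_isLeaf.1.symm h.adj_isLeaf.1.symm

lemma picker_eq_self (h : ¬∃ w, Picks g w v) : picker g v = v :=
  dif_neg h

lemma Picks.eq_none (hG : NoAdjacentLeaves G) (h : Picks g w v) : g v = none := by
  rcases hgv : g v with _ | ⟨u, hvu, hu⟩
  · rfl
  · exact (hG hvu h.adj_isLeaf.2 hu).elim

lemma swapOfChoice_of_eq_some {u : LeafNbr G v} (h : g v = some u) : swapOfChoice g v = u := by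
  simp only [swapOfChoice, h]

lemma swapOfChoice_of_eq_none (h : g v = none) : swapOfChoice g v = picker g v := by
  simp only [swapOfChoice, h]

lemma swapOfChoice_involutive (hG : NoAdjacentLeaves G) :
    Function.Involutive (swapOfChoice g) := by
  intro v
  rcases hgv : g v with _ | u
  · rw [swapOfChoice_of_eq_none hgv]
    by_cases h : ∃ w, Picks g w v
    · obtain ⟨w, hwv, hw⟩ := h
      rw [picker_eq ⟨hwv, hw⟩, swapOfChoice_of_eq_some hw]
    · rw [picker_eq_self h, swapOfChoice_of_eq_none hgv, picker_eq_self h]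
  · have hpick : Picks g v u := ⟨u.2, hgv⟩
    rw [swapOfChoice_of_eq_some hgv, swapOfChoice_of_eq_none (hpick.eq_none hG), picker_eq hpick]

noncomputable def ofLeafChoice (hG : NoAdjacentLeaves G) (g : ∀ v, Option (LeafNbr G v)) :
    Equiv.Perm (Fin d) :=
  (swapOfChoice_involutive (g := g) hG).toPerm

lemma ofLeafChoice_apply (hG : NoAdjacentLeaves G) (g : ∀ v, Option (LeafNbr G v)) (v : Fin d) :
    ofLeafChoice hG g v = swapOfChoice g v :=
  rfl

lemma isLeafSwapPerm_ofLeafChoice (hG : NoAdjacentLeaves G) (g : ∀ v, Option (LeafNbr G v)) :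
    IsLeafSwapPerm G (ofLeafChoice hG g) := by
  refine ⟨swapOfChoice_involutive hG, fun v hmove => ?_⟩
  rw [ofLeafChoice_apply] at hmove ⊢
  rcases hgv : g v with _ | ⟨u, hvu, hu⟩
  · rw [swapOfChoice_of_eq_none hgv] at hmove ⊢
    by_cases h : ∃ w, Picks g w v
    · obtain ⟨w, hw⟩ := h
      rw [picker_eq hw]
      exact .inl ⟨hw.adj_isLeaf.2, hw.adj_isLeaf.1.symm⟩
    · exact (hmove (picker_eq_self h)).elim
  · rw [swapOfChoice_of_eq_some hgv]
    exact .inr ⟨hu, hvu⟩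

lemma leafChoice_of_adj (h : G.Adj v (e v) ∧ IsLeaf G (e v)) :
    leafChoice G e v = some ⟨e v, h⟩ :=
  dif_pos h

lemma leafChoice_of_not_adj (h : ¬(G.Adj v (e v) ∧ IsLeaf G (e v))) : leafChoice G e v = none :=
  dif_neg h

lemma picks_leafChoice_iff : Picks (leafChoice G e) w v ↔ G.Adj w v ∧ IsLeaf G v ∧ e w = v := by
  constructor
  · rintro ⟨h, hw⟩
    refine ⟨h.1, h.2, ?_⟩
    by_cases hc : G.Adj w (e w) ∧ IsLeaf G (e w)
    · rw [leafChoice_of_adj hc] at hw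
      exact congrArg Subtype.val (Option.some_injective _ hw)
    · rw [leafChoice_of_not_adj hc] at hw
      cases hw
  · rintro ⟨hwv, hv, rfl⟩
    exact ⟨⟨hwv, hv⟩, leafChoice_of_adj ⟨hwv, hv⟩⟩

lemma ofLeafChoice_leafChoice (hG : NoAdjacentLeaves G) (he : IsLeafSwapPerm G e) :
    ofLeafChoice hG (leafChoice G e) = e := by
  refine Equiv.ext fun v => ?_
  rw [ofLeafChoice_apply]
  by_cases h : G.Adj v (e v) ∧ IsLeaf G (e v)
  · rw [swapOfChoice_of_eq_some (leafChoice_of_adj h)]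
  rw [swapOfChoice_of_eq_none (leafChoice_of_not_adj h)]
  by_cases hmove : e v = v
  · rw [hmove, picker_eq_self]
    rintro ⟨w, hw⟩
    obtain ⟨hwv, -, hew⟩ := picks_leafChoice_iff.1 hw
    exact hwv.ne (by rw [← he.1 w, hew, hmove])
  · have hv : IsLeaf G v := ((he.2 v hmove).resolve_right fun h' => h ⟨h'.2, h'.1⟩).1
    exact picker_eq (picks_leafChoice_iff.2 ⟨(he.adj hmove).symm, hv, he.1 v⟩)

lemma leafChoice_ofLeafChoice (hG : NoAdjacentLeaves G) (g : ∀ v, Option (LeafNbr G v)) :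
    leafChoice G (ofLeafChoice hG g) = g := by
  funext v
  rcases hgv : g v with _ | u
  · apply leafChoice_of_not_adj
    rw [ofLeafChoice_apply, swapOfChoice_of_eq_none hgv]
    by_cases h : ∃ w, Picks g w v
    · obtain ⟨w, hw⟩ := h
      rw [picker_eq hw]
      exact fun h' => hG h'.1.symm h'.2 hw.adj_isLeaf.2
    · rw [picker_eq_self h]
      exact fun h' => G.irrefl h'.1
  · have hu : ofLeafChoice hG g v = u := swapOfChoice_of_eq_some hgv
    rw [leafChoice_of_adj (hu ▸ u.2)]
    exact congrArg some (Subtype.ext hu)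

noncomputable def leafSwapEquiv (hG : NoAdjacentLeaves G) :
    {e | IsLeafSwapPerm G e} ≃ ∀ v, Option (LeafNbr G v) where
  toFun e := leafChoice G e
  invFun g := ⟨ofLeafChoice hG g, isLeafSwapPerm_ofLeafChoice hG g⟩
  left_inv e := Subtype.ext (ofLeafChoice_leafChoice hG e.2)
  right_inv := leafChoice_ofLeafChoice hG

end LeafChoice

lemma eqClass_eq_image {d : ℕ} (G : SimpleGraph (Fin d)) :
    eqClass G = relabel G '' {e | IsLeafSwapPerm G e} := by
  ext H
  simp [eqClass, eq_comm]

/-- for a tree on `d ≥ 4` nodes, `|[T]| = ∏ᵢ (1 + ℓᵢ)` where the `ℓᵢ`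
are the sizes of the groups of leaves sharing a common neighbor.  (Vertices with
no leaf neighbor contribute a factor `1 + 0 = 1`.) -/
theorem card_eqClass (d : ℕ) (hd : 4 ≤ d) (G : SimpleGraph (Fin d)) (hG : G.IsTree) :
    (eqClass G).ncard = ∏ v : Fin d, (1 + leafNbrCount G v) := by
  have hleaves : NoAdjacentLeaves G := hG.connected.noAdjacentLeaves (by omega)
  rw [eqClass_eq_image, (relabel_injOn hleaves).ncard_image, ← Nat.card_coe_set_eq,
    Nat.card_congr (leafSwapEquiv hleaves), Nat.card_pi]
  refine Finset.prod_congr rfl fun v _ => ?_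
  rw [Finite.card_option, add_comm, leafNbrCount, ← Nat.card_coe_set_eq]
  rfl
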